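/- arXiv:2010.16175 — 2 statements merged into one kernel-verified Lean document; each statement's English description precedes it below -/
import Mathlib

section
/- Let V ∈ C²(ℝ^d) satisfy |D_x^α V(x)| ≤ C⟨∇V(x)⟩^{1−ρ₀} for all |α| = 2, with ρ₀ > 0, and let s > 0 and r(x) = ⟨∇V(x)⟩^{−s}. Then there exists δ₀ > 0 such that |x−y| ≤ δ₀ r(x) implies δ₀ ≤ r(x)/r(y) ≤ 1/δ₀. -/
/-!
Put `⟨v⟩ = √(‖v‖² + 1)`. Since `ρ₀ > 0`, the hypothesis gives `‖D(∇V)‖ ≤ C ⟨∇V⟩`. On the segment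
`[x, y]` let `M` be the maximum of `⟨∇V⟩`; since `v ↦ ⟨v⟩` is 1-Lipschitz, the mean value theorem
gives `M ≤ ⟨∇V(x)⟩ + C M ‖x - y‖`, so `M ≤ 2 ⟨∇V(x)⟩` once `2 C ‖x - y‖ ≤ 1`. As `r ≤ 1`, this holds
when `‖x - y‖ ≤ δ₀ r(x)` for `δ₀` small, and by symmetry `⟨∇V(x)⟩` and `⟨∇V(y)⟩` agree up to a
factor 2, hence `r(x) / r(y)` lies in `[2⁻ˢ, 2ˢ]`.
-/

noncomputable section

/-- The Japanese bracket of the gradient: `⟨∇V(x)⟩ = √(|∇V(x)|² + 1)`. -/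
def japGrad {d : ℕ} (V : EuclideanSpace ℝ (Fin d) → ℝ) (x : EuclideanSpace ℝ (Fin d)) : ℝ :=
  Real.sqrt (‖fderiv ℝ V x‖ ^ 2 + 1)

theorem one_le_japGrad {d : ℕ} (V : EuclideanSpace ℝ (Fin d) → ℝ) (x : EuclideanSpace ℝ (Fin d)) :
    1 ≤ japGrad V x :=
  Real.one_le_sqrt.mpr (by nlinarith [sq_nonneg ‖fderiv ℝ V x‖])

theorem sqrt_sq_add_one_le_add_abs_sub (a b : ℝ) :
    √(a ^ 2 + 1) ≤ √(b ^ 2 + 1) + |a - b| := by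
  have hb : |b| ≤ √(b ^ 2 + 1) := Real.abs_le_sqrt (by linarith)
  have hsq : √(b ^ 2 + 1) ^ 2 = b ^ 2 + 1 := Real.sq_sqrt (by positivity)
  rw [Real.sqrt_le_left (by positivity)]
  nlinarith [le_abs_self (b * (a - b)), abs_mul b (a - b), sq_abs (a - b),
    mul_le_mul_of_nonneg_right hb (abs_nonneg (a - b))]

theorem sqrt_norm_sq_add_one_le_add_norm_sub {F : Type*} [NormedAddCommGroup F] (v w : F) :
    √(‖v‖ ^ 2 + 1) ≤ √(‖w‖ ^ 2 + 1) + ‖v - w‖ :=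
  (sqrt_sq_add_one_le_add_abs_sub ‖v‖ ‖w‖).trans (by gcongr; exact abs_norm_sub_norm_le v w)

theorem sqrt_norm_sq_add_one_le_two_mul {E F : Type*} [NormedAddCommGroup E] [NormedSpace ℝ E]
    [NormedAddCommGroup F] [NormedSpace ℝ F] {G : E → F} {C : ℝ} (hG : Differentiable ℝ G)
    (hDG : ∀ w, ‖fderiv ℝ G w‖ ≤ C * √(‖G w‖ ^ 2 + 1)) {x y : E} (hxy : 2 * C * ‖x - y‖ ≤ 1) :
    √(‖G y‖ ^ 2 + 1) ≤ 2 * √(‖G x‖ ^ 2 + 1) := by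
  set φ : E → ℝ := fun w ↦ √(‖G w‖ ^ 2 + 1)
  have hC : 0 ≤ C := nonneg_of_mul_nonneg_left ((norm_nonneg _).trans (hDG x)) (by positivity)
  have hcompact : IsCompact (segment ℝ x y) := by
    rw [segment_eq_image']
    exact isCompact_Icc.image (by fun_prop)
  obtain ⟨z, hz, hzmax⟩ := hcompact.exists_isMaxOn ⟨x, left_mem_segment ℝ x y⟩
    (hG.continuous.norm.pow 2 |>.add continuous_const).sqrt.continuousOn
  have hmax : ∀ w ∈ segment ℝ x y, φ w ≤ φ z := fun w hw ↦ hzmax hw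
  have hbound : ∀ w ∈ segment ℝ x y, ‖fderiv ℝ G w‖ ≤ C * φ z := fun w hw ↦
    (hDG w).trans (mul_le_mul_of_nonneg_left (hmax w hw) hC)
  have hMVT : ‖G z - G x‖ ≤ C * φ z * ‖x - y‖ := calc
    ‖G z - G x‖ ≤ C * φ z * ‖z - x‖ := (convex_segment x y).norm_image_sub_le_of_norm_fderiv_le
        (fun w _ ↦ hG w) hbound (left_mem_segment ℝ x y) hz
    _ ≤ C * φ z * ‖x - y‖ := by
        gcongr
        simpa only [norm_sub_rev y x] using norm_sub_le_of_mem_segment hz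
  have hφz : φ z ≤ φ x + φ z / 2 := calc
    φ z ≤ φ x + ‖G z - G x‖ := sqrt_norm_sq_add_one_le_add_norm_sub _ _
    _ ≤ φ x + φ z / 2 := by nlinarith [Real.sqrt_nonneg (‖G z‖ ^ 2 + 1)]
  linarith [hmax y (right_mem_segment ℝ x y)]

theorem two_rpow_neg_le_rpow_neg_div_rpow_neg {a b s : ℝ} (ha : 0 < a) (hb : 0 < b) (hs : 0 ≤ s)
    (hba : b ≤ 2 * a) (hab : a ≤ 2 * b) :
    2 ^ (-s) ≤ a ^ (-s) / b ^ (-s) ∧ a ^ (-s) / b ^ (-s) ≤ 2 ^ s := by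
  rw [Real.rpow_neg ha.le, Real.rpow_neg hb.le, inv_div_inv, ← Real.div_rpow hb.le ha.le,
    Real.rpow_neg zero_le_two, ← Real.inv_rpow zero_le_two]
  constructor
  · exact Real.rpow_le_rpow (by norm_num) (by rw [le_div_iff₀ ha]; linarith) hs
  · exact Real.rpow_le_rpow (by positivity) (by rw [div_le_iff₀ ha]; linarith) hs

/-- slow variation of the weight `r(x) = ⟨∇V(x)⟩^{−s}`. If
`|D²V(x)| ≤ C⟨∇V(x)⟩^{1−ρ₀}` with `ρ₀ > 0` and `s > 0`, then there is `δ₀ > 0` such that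
`|x−y| ≤ δ₀ r(x)` implies `δ₀ ≤ r(x)/r(y) ≤ 1/δ₀`. -/
theorem slow_variation (d : ℕ) (V : EuclideanSpace ℝ (Fin d) → ℝ) (hV : ContDiff ℝ 2 V)
    (C ρ₀ s : ℝ) (hρ₀ : 0 < ρ₀) (hs : 0 < s)
    (hC : ∀ x, ‖fderiv ℝ (fderiv ℝ V) x‖ ≤ C * japGrad V x ^ (1 - ρ₀)) :
    ∃ δ₀ : ℝ, 0 < δ₀ ∧ ∀ x y : EuclideanSpace ℝ (Fin d),
      ‖x - y‖ ≤ δ₀ * japGrad V x ^ (-s) →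
        δ₀ ≤ japGrad V x ^ (-s) / japGrad V y ^ (-s) ∧
        japGrad V x ^ (-s) / japGrad V y ^ (-s) ≤ 1 / δ₀ := by
  have hpos : ∀ x, 0 < japGrad V x := fun x ↦ one_pos.trans_le (one_le_japGrad V x)
  have hC0 : 0 ≤ C :=
    nonneg_of_mul_nonneg_left ((norm_nonneg (fderiv ℝ (fderiv ℝ V) 0)).trans (hC 0))
      (Real.rpow_pos_of_pos (hpos 0) _)
  have hDV : ∀ x, ‖fderiv ℝ (fderiv ℝ V) x‖ ≤ C * japGrad V x := fun x ↦ (hC x).trans <|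
    mul_le_mul_of_nonneg_left (Real.rpow_le_self_of_one_le (one_le_japGrad V x) (by linarith)) hC0
  have hdiff : Differentiable ℝ (fderiv ℝ V) :=
    (hV.fderiv_right one_add_one_eq_two.le).differentiable one_ne_zero
  set δ₀ := min (2 ^ (-s)) (1 / (2 * (C + 1)))
  have hδ₀ : 0 < δ₀ := by positivity
  refine ⟨δ₀, hδ₀, fun x y hxy ↦ ?_⟩
  have hr : japGrad V x ^ (-s) ≤ 1 :=
    Real.rpow_le_one_of_one_le_of_nonpos (one_le_japGrad V x) (by linarith)
  have hnear : ‖x - y‖ ≤ 1 / (2 * (C + 1)) :=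
    hxy.trans ((mul_le_of_le_one_right hδ₀.le hr).trans (min_le_right _ _))
  have hCxy : 2 * C * ‖x - y‖ ≤ 1 := by
    rw [le_div_iff₀ (by positivity)] at hnear
    nlinarith [norm_nonneg (x - y)]
  obtain ⟨hlow, hup⟩ := two_rpow_neg_le_rpow_neg_div_rpow_neg (hpos x) (hpos y) hs.le
    (sqrt_norm_sq_add_one_le_two_mul hdiff hDV hCxy)
    (sqrt_norm_sq_add_one_le_two_mul hdiff hDV (by rwa [norm_sub_rev]))
  refine ⟨(min_le_left _ _).trans hlow, hup.trans ?_⟩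
  rw [← inv_inv ((2 : ℝ) ^ s), ← Real.rpow_neg zero_le_two, ← one_div]
  exact one_div_le_one_div_of_le hδ₀ (min_le_left _ _)
end
end

section
/- Suppose a nontrivial family of skew-adjoint operators π(Y), Y ∈ G (a Lie algebra representation of the graded algebra G generated as a Lie algebra by G₁ and Y₁₂), and a vector u satisfy Re⟨π(F_{b'})u, u⟩ = 0 where F_{b'} = Y₁₂ − Σ_k((Y'_{k,1})² + ¼(Y''_{k,1})²) − ib'₁(Y'₁₁Y''₂₁ − Y'₂₁Y''₁₁) − ib'₂(Y''₁₁Y''₂₁ + Y'₁₁Y'₂₁). Then π(Y)u = 0 for all Y ∈ G₁ and π(Y₁₂)u = 0, hence π(Y)u = 0 for all Y ∈ G. -/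
open scoped InnerProductSpace

noncomputable section

/-- Rockland-type condition. Let `π` be a representation of the graded Lie
algebra `G` (basis `π 0 = π(Y'₁₁), π 1 = π(Y'₂₁), π 2 = π(Y''₁₁), π 3 = π(Y''₂₁),
π 4 = π(Y₁₂), π 5 = π(Y₂₂), π 6 = π(Y₁₃), π 7 = π(Y₂₃)`) by formally skew-adjoint
operators on a complex inner product space, satisfying the bracket relations of `G`.
If the vector `u` satisfies `π(F_{b'})u = 0` (so in particular
`Re⟨π(F_{b'})u, u⟩ = 0`), where
`F_{b'} = Y₁₂ − Σ_k((Y'_{k,1})² + ¼(Y''_{k,1})²) − ib'₁(Y'₁₁Y''₂₁ − Y'₂₁Y''₁₁)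
  − ib'₂(Y''₁₁Y''₂₁ + Y'₁₁Y'₂₁)`,
then `π(Y)u = 0` for all `Y ∈ G₁`, `π(Y₁₂)u = 0`, and hence `π(Y)u = 0` for all
`Y ∈ G` (i.e. on every basis element). -/
theorem rockland_kernel_trivial {H : Type*} [NormedAddCommGroup H]
    [InnerProductSpace ℂ H]
    (π : Fin 8 → (H →ₗ[ℂ] H))
    (hskew : ∀ (i : Fin 8) (w₁ w₂ : H), ⟪π i w₁, w₂⟫_ℂ = - ⟪w₁, π i w₂⟫_ℂ)
    (h02 : ∀ w, π 0 (π 2 w) - π 2 (π 0 w) = π 5 w)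
    (h13 : ∀ w, π 1 (π 3 w) - π 3 (π 1 w) = π 5 w)
    (h40 : ∀ w, π 4 (π 0 w) - π 0 (π 4 w) = π 6 w)
    (h41 : ∀ w, π 4 (π 1 w) - π 1 (π 4 w) = π 7 w)
    (h01 : ∀ w, π 0 (π 1 w) = π 1 (π 0 w))
    (h23 : ∀ w, π 2 (π 3 w) = π 3 (π 2 w))
    (h03 : ∀ w, π 0 (π 3 w) = π 3 (π 0 w))
    (h12 : ∀ w, π 1 (π 2 w) = π 2 (π 1 w))
    (h42 : ∀ w, π 4 (π 2 w) = π 2 (π 4 w))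
    (h43 : ∀ w, π 4 (π 3 w) = π 3 (π 4 w))
    (hcent : ∀ (i j : Fin 8), (5 : Fin 8) ≤ j → ∀ w, π i (π j w) = π j (π i w))
    (b' : Fin 2 → ℝ) (u : H)
    (hF : π 4 u
        - (π 0 (π 0 u) + (1 / 4 : ℂ) • π 2 (π 2 u)
            + π 1 (π 1 u) + (1 / 4 : ℂ) • π 3 (π 3 u))
        - (Complex.I * (b' 0 : ℂ)) • (π 0 (π 3 u) - π 1 (π 2 u))
        - (Complex.I * (b' 1 : ℂ)) • (π 2 (π 3 u) + π 0 (π 1 u)) = 0) :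
    ∀ i : Fin 8, π i u = 0 := by
  have hs : ∀ i j : Fin 8, ⟪u, π i (π j u)⟫_ℂ = -⟪π i u, π j u⟫_ℂ := by
    intro i j
    rw [hskew i u (π j u), neg_neg]
  -- inner products of commuting pairs are real
  have hreal : ∀ i j : Fin 8, (∀ w, π i (π j w) = π j (π i w)) →
      ⟪π i u, π j u⟫_ℂ = ((⟪π i u, π j u⟫_ℂ).re : ℂ) := by
    intro i j hcomm
    have h1 : ⟪π i u, π j u⟫_ℂ = ⟪π j u, π i u⟫_ℂ := by
      calc ⟪π i u, π j u⟫_ℂ = -⟪u, π i (π j u)⟫_ℂ := hskew i u (π j u)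
        _ = -⟪u, π j (π i u)⟫_ℂ := by rw [hcomm]
        _ = ⟪π j u, π i u⟫_ℂ := (hskew j u (π i u)).symm
    have h2 : ⟪π j u, π i u⟫_ℂ = (starRingEnd ℂ) ⟪π i u, π j u⟫_ℂ :=
      (inner_conj_symm _ _).symm
    have h3 := h1.trans h2
    have him : (⟪π i u, π j u⟫_ℂ).im = 0 := by
      have := congrArg Complex.im h3
      simp only [Complex.conj_im] at this
      linarith
    exact Complex.ext (by simp) (by simp [him])
  have h4 : ⟪u, π 4 u⟫_ℂ = ((⟪u, π 4 u⟫_ℂ).im : ℂ) * Complex.I := by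
    have h1 : ⟪π 4 u, u⟫_ℂ = - ⟪u, π 4 u⟫_ℂ := hskew 4 u u
    have h2 : ⟪π 4 u, u⟫_ℂ = (starRingEnd ℂ) ⟪u, π 4 u⟫_ℂ := (inner_conj_symm _ _).symm
    have h3 := h2.symm.trans h1
    have hre : (⟪u, π 4 u⟫_ℂ).re = 0 := by
      have := congrArg Complex.re h3
      simp only [Complex.conj_re, Complex.neg_re] at this
      linarith
    exact Complex.ext (by simp [hre]) (by simp)
  have c00 : ⟪u, π 0 (π 0 u)⟫_ℂ = -((‖π 0 u‖ ^ 2 : ℝ) : ℂ) := by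
    rw [hs, inner_self_eq_norm_sq_to_K]; norm_cast
  have c11 : ⟪u, π 1 (π 1 u)⟫_ℂ = -((‖π 1 u‖ ^ 2 : ℝ) : ℂ) := by
    rw [hs, inner_self_eq_norm_sq_to_K]; norm_cast
  have c22 : ⟪u, π 2 (π 2 u)⟫_ℂ = -((‖π 2 u‖ ^ 2 : ℝ) : ℂ) := by
    rw [hs, inner_self_eq_norm_sq_to_K]; norm_cast
  have c33 : ⟪u, π 3 (π 3 u)⟫_ℂ = -((‖π 3 u‖ ^ 2 : ℝ) : ℂ) := by
    rw [hs, inner_self_eq_norm_sq_to_K]; norm_cast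
  have c03 : ⟪u, π 0 (π 3 u)⟫_ℂ = -(((⟪π 0 u, π 3 u⟫_ℂ).re : ℝ) : ℂ) := by
    rw [hs, hreal 0 3 h03]; simp
  have c12 : ⟪u, π 1 (π 2 u)⟫_ℂ = -(((⟪π 1 u, π 2 u⟫_ℂ).re : ℝ) : ℂ) := by
    rw [hs, hreal 1 2 h12]; simp
  have c23 : ⟪u, π 2 (π 3 u)⟫_ℂ = -(((⟪π 2 u, π 3 u⟫_ℂ).re : ℝ) : ℂ) := by
    rw [hs, hreal 2 3 h23]; simp
  have c01 : ⟪u, π 0 (π 1 u)⟫_ℂ = -(((⟪π 0 u, π 1 u⟫_ℂ).re : ℝ) : ℂ) := by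
    rw [hs, hreal 0 1 h01]; simp
  have h := congrArg (fun v => (⟪u, v⟫_ℂ)) hF
  simp only [inner_sub_right, inner_add_right, inner_smul_right, inner_zero_right] at h
  rw [h4, c00, c11, c22, c33, c03, c12, c23, c01] at h
  have hc := congrArg (starRingEnd ℂ) h
  simp only [map_sub, map_add, map_mul, map_neg, map_zero, Complex.conj_I,
    Complex.conj_ofReal, map_div₀, map_one, map_ofNat] at hc
  have key : ((‖π 0 u‖ ^ 2 + ‖π 1 u‖ ^ 2 + (1 / 4) * ‖π 2 u‖ ^ 2
      + (1 / 4) * ‖π 3 u‖ ^ 2 : ℝ) : ℂ) = 0 := by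
    push_cast at h hc ⊢
    linear_combination ((1 : ℂ) / 2) * h + ((1 : ℂ) / 2) * hc
  have kr : ‖π 0 u‖ ^ 2 + ‖π 1 u‖ ^ 2 + (1 / 4) * ‖π 2 u‖ ^ 2
      + (1 / 4) * ‖π 3 u‖ ^ 2 = 0 := by exact_mod_cast key
  have sq0 := sq_nonneg ‖π 0 u‖
  have sq1 := sq_nonneg ‖π 1 u‖
  have sq2 := sq_nonneg ‖π 2 u‖
  have sq3 := sq_nonneg ‖π 3 u‖
  have p0 : π 0 u = 0 := by
    rw [← norm_eq_zero, ← pow_eq_zero_iff (n := 2) two_ne_zero]; linarith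
  have p1 : π 1 u = 0 := by
    rw [← norm_eq_zero, ← pow_eq_zero_iff (n := 2) two_ne_zero]; linarith
  have p2 : π 2 u = 0 := by
    rw [← norm_eq_zero, ← pow_eq_zero_iff (n := 2) two_ne_zero]; linarith
  have p3 : π 3 u = 0 := by
    rw [← norm_eq_zero, ← pow_eq_zero_iff (n := 2) two_ne_zero]; linarith
  have p4 : π 4 u = 0 := by
    have hF' := hF
    rw [p0, p1, p2, p3] at hF'
    simpa using hF'
  have p5 : π 5 u = 0 := by
    have := h02 u
    rw [p0, p2] at this
    simpa using this.symm
  have p6 : π 6 u = 0 := by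
    have := h40 u
    rw [p0, p4] at this
    simpa using this.symm
  have p7 : π 7 u = 0 := by
    have := h41 u
    rw [p1, p4] at this
    simpa using this.symm
  intro i
  fin_cases i
  exacts [p0, p1, p2, p3, p4, p5, p6, p7]
end
end
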